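/- arXiv:1612.04607 — 2 statements merged into one kernel-verified Lean document; each statement's English description precedes it below -/
import Mathlib

section
/- Suppose ε_i > 0 for all i. Then v^D ≤ ṽ^D(ε) ≤ ṽ(ε) = v, where ṽ(ε) is the minimum of Σ_i C_i(u_i,x_i) over Ω̃(ε) = {((u_i,x_i))_i : (u_i,x_i) ∈ G̃_i(ε_i), Σ_i x_i = d}. Consequently 0 ≤ ṽ(ε) − ṽ^D(ε) ≤ v − v^D: the duality gap of the modified problem is nonnegative and no larger than the duality gap of the original problem; in particular, if v = v^D then ṽ(ε) = ṽ^D(ε). -/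
noncomputable section

/-- Feasible set of a single generator with capacity `xmax`. -/
def Gen (xmax : ℝ) : Set (ℝ × ℝ) :=
  {ux | (ux.1 = 0 ∨ ux.1 = 1) ∧ 0 ≤ ux.2 ∧ ux.2 ≤ ux.1 * xmax}

/-- Cost of a generator. -/
def Cost (w : ℝ) (c : ℝ → ℝ) (ux : ℝ × ℝ) : ℝ := w * ux.1 + c ux.2

/-- Primal feasible set. -/
def Omega (n : ℕ) (xmax : Fin n → ℝ) (d : ℝ) : Set (Fin n → ℝ × ℝ) :=
  {X | (∀ i, X i ∈ Gen (xmax i)) ∧ ∑ i, (X i).2 = d}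

/-- Lower bound `x^c,min` of possible output volumes of generator `i`. -/
def xcmin (n : ℕ) (xmax : Fin n → ℝ) (d : ℝ) (i : Fin n) : ℝ :=
  max (d - ∑ j ∈ Finset.univ.erase i, xmax j) 0

/-- Upper bound `x^c,max` of possible output volumes of generator `i`. -/
def xcmax (n : ℕ) (xmax : Fin n → ℝ) (d : ℝ) (i : Fin n) : ℝ :=
  min d (xmax i)

/-- The modified feasible set `G̃_i(ε)`. -/
def Gtilde (xmax xcmin xcmax ε : ℝ) : Set (ℝ × ℝ) :=
  {((0 : ℝ), (0 : ℝ))} ∪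
    {ux | ux.1 = 1 ∧ max (xcmin - ε) 0 ≤ ux.2 ∧ ux.2 ≤ min (xcmax + ε) xmax}

/-- Modified primal feasible set `Ω̃(ε)`. -/
def OmegaTilde (n : ℕ) (xmax : Fin n → ℝ) (d : ℝ) (ε : Fin n → ℝ) :
    Set (Fin n → ℝ × ℝ) :=
  {X | (∀ i, X i ∈ Gtilde (xmax i) (xcmin n xmax d i) (xcmax n xmax d i) (ε i)) ∧
    ∑ i, (X i).2 = d}

/-! Every primal-feasible profile already lies in the modified sets `G̃_i(ε)`: generator `i` can
produce neither more than `min d (xmax i)` nor less than what the others cannot cover. Hence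
`Ω̃(ε) = Ω` and `ṽ(ε) = v`. Since `G̃_i(ε) ⊆ G_i`, the modified profits are smaller, so the
modified dual function dominates the original one, and weak duality bounds it by `ṽ(ε)`. -/

open Finset

section Generator

variable {xmax a b ε : ℝ} {ux : ℝ × ℝ}

lemma nonneg_of_mem_Gen (h : ux ∈ Gen xmax) : 0 ≤ ux.2 := h.2.1

lemma le_xmax_of_mem_Gen (hxmax : 0 ≤ xmax) (h : ux ∈ Gen xmax) : ux.2 ≤ xmax := by
  obtain ⟨hu | hu, -, hx⟩ := h <;> rw [hu] at hx <;> linarith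

lemma Gtilde_subset_Gen : Gtilde xmax a b ε ⊆ Gen xmax := by
  rintro ux (h | ⟨hu, hlo, hhi⟩)
  · rw [Set.mem_singleton_iff.1 h]
    exact ⟨Or.inl rfl, le_rfl, by simp⟩
  · refine ⟨Or.inr hu, (le_max_right _ _).trans hlo, ?_⟩
    rw [hu, one_mul]
    exact hhi.trans (min_le_right _ _)

lemma mem_Gtilde_of_mem_Gen (hε : 0 ≤ ε) (h : ux ∈ Gen xmax) (hlo : a ≤ ux.2)
    (hhi : ux.2 ≤ b) : ux ∈ Gtilde xmax a b ε := by
  obtain ⟨hu | hu, hx0, hx⟩ := h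
  · left
    rw [hu, zero_mul] at hx
    exact Prod.ext hu (le_antisymm hx hx0)
  · right
    rw [hu, one_mul] at hx
    exact ⟨hu, max_le (by linarith) hx0, le_min (by linarith) hx⟩

end Generator

section Feasible

variable {n : ℕ} {xmax : Fin n → ℝ} {d : ℝ} {X : Fin n → ℝ × ℝ}

lemma xcmin_le_of_mem_Omega (hxmax : ∀ i, 0 ≤ xmax i) (hX : X ∈ Omega n xmax d)
    (i : Fin n) : xcmin n xmax d i ≤ (X i).2 := by
  obtain ⟨hG, hsum⟩ := hX
  have hsplit : ∑ j ∈ univ.erase i, (X j).2 + (X i).2 = d :=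
    (sum_erase_add _ _ (mem_univ i)).trans hsum
  have hothers : ∑ j ∈ univ.erase i, (X j).2 ≤ ∑ j ∈ univ.erase i, xmax j :=
    sum_le_sum fun j _ => le_xmax_of_mem_Gen (hxmax j) (hG j)
  exact max_le (by linarith) (nonneg_of_mem_Gen (hG i))

lemma le_xcmax_of_mem_Omega (hxmax : ∀ i, 0 ≤ xmax i) (hX : X ∈ Omega n xmax d)
    (i : Fin n) : (X i).2 ≤ xcmax n xmax d i := by
  obtain ⟨hG, hsum⟩ := hX
  refine le_min ?_ (le_xmax_of_mem_Gen (hxmax i) (hG i))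
  rw [← hsum]
  exact single_le_sum (fun j _ => nonneg_of_mem_Gen (hG j)) (mem_univ i)

lemma OmegaTilde_eq_Omega {ε : Fin n → ℝ} (hxmax : ∀ i, 0 ≤ xmax i) (hε : ∀ i, 0 ≤ ε i) :
    OmegaTilde n xmax d ε = Omega n xmax d := by
  ext X
  refine ⟨fun ⟨hG, hsum⟩ => ⟨fun i => Gtilde_subset_Gen (hG i), hsum⟩,
    fun hX => ⟨fun i => ?_, hX.2⟩⟩
  exact mem_Gtilde_of_mem_Gen (hε i) (hX.1 i) (xcmin_le_of_mem_Omega hxmax hX i)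
    (le_xcmax_of_mem_Omega hxmax hX i)

end Feasible

lemma price_mul_sub_sum_profit_le_sum {ι : Type*} [Fintype ι] {S : ι → Set (ℝ × ℝ)}
    {f : ι → ℝ × ℝ → ℝ} {π : ι → ℝ} {p d : ℝ} {X : ι → ℝ × ℝ}
    (hπ : ∀ i, IsGreatest ((fun ux => p * ux.2 - f i ux) '' S i) (π i))
    (hX : ∀ i, X i ∈ S i) (hsum : ∑ i, (X i).2 = d) :
    p * d - ∑ i, π i ≤ ∑ i, f i (X i) := by
  have hprofit : ∀ i, p * (X i).2 - f i (X i) ≤ π i := fun i => (hπ i).2 ⟨X i, hX i, rfl⟩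
  rw [← hsum, mul_sum, ← sub_nonneg, ← sum_sub_distrib, ← sum_sub_distrib]
  exact sum_nonneg fun i _ => by linarith [hprofit i]

lemma IsLUB.range_mono {α : Type*} {f g : α → ℝ} {a b : ℝ} (ha : IsLUB (Set.range f) a)
    (hb : IsLUB (Set.range g) b) (hfg : ∀ x, f x ≤ g x) : a ≤ b :=
  ha.2 <| Set.forall_mem_range.2 fun x => (hfg x).trans (hb.1 ⟨x, rfl⟩)

theorem stmt_13_general (n : ℕ) (d : ℝ)
    (w xmax : Fin n → ℝ) (c : Fin n → ℝ → ℝ)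
    (hxmax : ∀ i, 0 < xmax i)
    (ε : Fin n → ℝ) (hε : ∀ i, 0 < ε i)
    (π πt : ℝ → Fin n → ℝ)
    (hπ : ∀ p i, IsGreatest ((fun ux => p * ux.2 - Cost (w i) (c i) ux) ''
        Gen (xmax i)) (π p i))
    (hπt : ∀ p i, IsGreatest ((fun ux => p * ux.2 - Cost (w i) (c i) ux) ''
        Gtilde (xmax i) (xcmin n xmax d i) (xcmax n xmax d i) (ε i)) (πt p i))
    (v vt vD vDt : ℝ)
    (hv : IsLeast {r : ℝ | ∃ X ∈ Omega n xmax d,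
        r = ∑ i, Cost (w i) (c i) (X i)} v)
    (hvt : IsLeast {r : ℝ | ∃ X ∈ OmegaTilde n xmax d ε,
        r = ∑ i, Cost (w i) (c i) (X i)} vt)
    (hvD : IsLUB (Set.range fun p => p * d - ∑ i, π p i) vD)
    (hvDt : IsLUB (Set.range fun p => p * d - ∑ i, πt p i) vDt) :
    vD ≤ vDt ∧ vDt ≤ vt ∧ vt = v
    ∧ 0 ≤ vt - vDt ∧ vt - vDt ≤ v - vD
    ∧ (v = vD → vt = vDt) := by
  have hvt_eq : vt = v :=
    hvt.unique (OmegaTilde_eq_Omega (fun i => (hxmax i).le) (fun i => (hε i).le) ▸ hv)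
  have hπt_le : ∀ p i, πt p i ≤ π p i := fun p i =>
    (hπ p i).2 (Set.image_mono Gtilde_subset_Gen (hπt p i).1)
  have hvD_le : vD ≤ vDt := hvD.range_mono hvDt fun p =>
    sub_le_sub_left (sum_le_sum fun i _ => hπt_le p i) _
  have hvDt_le : vDt ≤ vt := by
    obtain ⟨X, ⟨hX, hsum⟩, rfl⟩ := hvt.1
    exact hvDt.2 <| Set.forall_mem_range.2 fun p =>
      price_mul_sub_sum_profit_le_sum (hπt p) hX hsum
  exact ⟨hvD_le, hvDt_le, hvt_eq, by linarith, by linarith, fun h => by linarith⟩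

/-- For `ε_i > 0`: `v^D ≤ ṽ^D(ε) ≤ ṽ(ε) = v`.  Consequently
`0 ≤ ṽ(ε) − ṽ^D(ε) ≤ v − v^D`: the duality gap of the modified problem is nonnegative and
no larger than that of the original problem; in particular `v = v^D → ṽ(ε) = ṽ^D(ε)`. -/
theorem stmt_13 (n : ℕ) (d : ℝ) (hd : 0 < d)
    (w xmax : Fin n → ℝ) (c : Fin n → ℝ → ℝ)
    (hxmax : ∀ i, 0 < xmax i) (hw : ∀ i, 0 ≤ w i)
    (hconv : ∀ i, ConvexOn ℝ (Set.Icc 0 (xmax i)) (c i))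
    (hmono : ∀ i, MonotoneOn (c i) (Set.Icc 0 (xmax i)))
    (hcont : ∀ i, ContinuousOn (c i) (Set.Icc 0 (xmax i)))
    (hc0 : ∀ i, c i 0 = 0)
    (hfeas : d ≤ ∑ i, xmax i)
    (ε : Fin n → ℝ) (hε : ∀ i, 0 < ε i)
    (π πt : ℝ → Fin n → ℝ)
    (hπ : ∀ p i, IsGreatest ((fun ux => p * ux.2 - Cost (w i) (c i) ux) ''
        Gen (xmax i)) (π p i))
    (hπt : ∀ p i, IsGreatest ((fun ux => p * ux.2 - Cost (w i) (c i) ux) ''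
        Gtilde (xmax i) (xcmin n xmax d i) (xcmax n xmax d i) (ε i)) (πt p i))
    (v vt vD vDt : ℝ)
    (hv : IsLeast {r : ℝ | ∃ X ∈ Omega n xmax d,
        r = ∑ i, Cost (w i) (c i) (X i)} v)
    (hvt : IsLeast {r : ℝ | ∃ X ∈ OmegaTilde n xmax d ε,
        r = ∑ i, Cost (w i) (c i) (X i)} vt)
    (hvD : IsLUB (Set.range fun p => p * d - ∑ i, π p i) vD)
    (hvDt : IsLUB (Set.range fun p => p * d - ∑ i, πt p i) vDt) :
    vD ≤ vDt ∧ vDt ≤ vt ∧ vt = v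
    ∧ 0 ≤ vt - vDt ∧ vt - vDt ≤ v - vD
    ∧ (v = vD → vt = vDt) :=
  stmt_13_general n d w xmax c hxmax ε hε π πt hπ hπt v vt vD vDt hv hvt hvD hvDt
end
end

section
/- Assume Î ≠ ∅ and that for every i ∈ Î the number ε_i > 0 satisfies d + ε_i ≤ x_i^max and (w_i + c_i(y))/y > ∂₊c_i(y) for all y ∈ (0, d + ε_i]. Then every p ∈ P̄⁺(ε) satisfies p ≤ min over i ∈ Î of (w_i + c_i(d + ε_i))/(d + ε_i), and consequently π̂_i(p, ε_i) = 0 for every i ∈ Î and every p ∈ P̄⁺(ε): no LNMGU has positive profit in the dual problem. -/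
/-!
Under the hypothesis on `εᵢ`, the average cost `(wᵢ + cᵢ y) / y` of an LNMGU `i` has negative right
derivative `(∂₊cᵢ(y) y - wᵢ - cᵢ y) / y²` on `(0, d + εᵢ]`, so it is at least
`Kᵢ = (wᵢ + cᵢ(d + εᵢ)) / (d + εᵢ)` at every output `i` may produce in `Ĝᵢ(εᵢ)`; hence its relaxed
profit vanishes at every price `q ≤ Kᵢ`. If a dual maximizer `p` exceeded `Kᵢ`, lowering the price
to `Kᵢ` would cost `(p - Kᵢ) d` in the term `q d`, while the profits, all nondecreasing in the price,
would drop by at least `(p - Kᵢ)(d + εᵢ)`: that is what `i` earns at price `p` by producing `d + εᵢ`.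
The objective would strictly increase, contradicting maximality.
-/

noncomputable section

/-- The relaxed modified feasible set `Ĝ_i(ε)`. -/
def Ghat (xmax xcmax ε : ℝ) : Set (ℝ × ℝ) :=
  {ux ∈ Gen xmax | ux.2 ≤ xcmax + ε}

open Set Finset

theorem image_le_of_deriv_right_nonpos {f f' : ℝ → ℝ} {a b : ℝ}
    (hf : ContinuousOn f (Icc a b))
    (hf' : ∀ x ∈ Ico a b, HasDerivWithinAt f (f' x) (Ici x) x)
    (hnonpos : ∀ x ∈ Ico a b, f' x ≤ 0) : ∀ ⦃x⦄, x ∈ Icc a b → f x ≤ f a :=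
  image_le_of_deriv_right_le_deriv_boundary hf hf' le_rfl continuousOn_const
    (fun _ _ => hasDerivWithinAt_const _ _ _) hnonpos

theorem div_le_div_of_deriv_right_le_div {f f' : ℝ → ℝ} {a b : ℝ} (ha : 0 < a) (hab : a ≤ b)
    (hf : ContinuousOn f (Icc a b))
    (hf' : ∀ x ∈ Ico a b, HasDerivWithinAt f (f' x) (Ici x) x)
    (hle : ∀ x ∈ Ico a b, f' x ≤ f x / x) : f b / b ≤ f a / a := by
  have hpos : ∀ x ∈ Icc a b, x ≠ 0 := fun x hx => (ha.trans_le hx.1).ne'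
  refine image_le_of_deriv_right_nonpos (f := fun x => f x / x)
    (hf.div continuousOn_id hpos)
    (fun x hx => (hf' x hx).div (hasDerivWithinAt_id x _) (hpos x (Ico_subset_Icc_self hx)))
    (fun x hx => ?_) (right_mem_Icc.2 hab)
  have : f' x * x ≤ f x := (le_div_iff₀ (ha.trans_le hx.1)).1 (hle x hx)
  exact div_nonpos_of_nonpos_of_nonneg (by simpa using this) (by positivity)

def profit (w : ℝ) (c : ℝ → ℝ) (p : ℝ) (ux : ℝ × ℝ) : ℝ := p * ux.2 - Cost w c ux

section Profit

variable {w : ℝ} {c : ℝ → ℝ}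

theorem monotone_of_isGreatest_profit {S : Set (ℝ × ℝ)} {v : ℝ → ℝ}
    (hS : ∀ ux ∈ S, 0 ≤ ux.2) (hv : ∀ p, IsGreatest (profit w c p '' S) (v p)) : Monotone v := by
  intro q r hqr
  obtain ⟨ux, hux, hvq⟩ := (hv q).1
  rw [← hvq]
  calc profit w c q ux ≤ profit w c r ux := by
        unfold profit; nlinarith [hS ux hux]
    _ ≤ v r := (hv r).2 ⟨ux, hux, rfl⟩

theorem Gen.snd_nonneg {xmax : ℝ} {ux : ℝ × ℝ} (h : ux ∈ Gen xmax) : 0 ≤ ux.2 := h.2.1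

theorem Ghat_subset_Gen (xmax xc ε : ℝ) : Ghat xmax xc ε ⊆ Gen xmax := sep_subset _ _

theorem isGreatest_profit_Ghat_eq_zero {xmax xc ε q v : ℝ} (hw : 0 ≤ w) (hc0 : c 0 = 0)
    (hbound : 0 ≤ xc + ε) (hq : ∀ x, 0 < x → x ≤ xc + ε → q * x ≤ w + c x)
    (hv : IsGreatest (profit w c q '' Ghat xmax xc ε) v) : v = 0 := by
  refine le_antisymm ?_ (hv.2 ⟨(0, 0), ⟨⟨Or.inl rfl, le_rfl, by simp⟩, hbound⟩, ?_⟩)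
  · obtain ⟨⟨u, x⟩, ⟨⟨hu | hu, hx0, hxu⟩, hxle⟩, rfl⟩ := hv.1 <;>
      simp only at hu hx0 hxu hxle <;> subst hu
    · obtain rfl : x = 0 := le_antisymm (by simpa using hxu) hx0
      simp [profit, Cost, hc0]
    · rcases hx0.eq_or_lt with rfl | hx
      · simp [profit, Cost, hc0, hw]
      · simpa [profit, Cost] using hq x hx hxle
  · simp [profit, Cost, hc0]

theorem div_mul_le_of_deriv_right_lt {xmax y z : ℝ} {dp : ℝ → ℝ} (hy : 0 < y) (hyz : y ≤ z)
    (hzx : z ≤ xmax) (hcont : ContinuousOn c (Icc 0 xmax))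
    (hdp : ∀ t, 0 < t → t < xmax → HasDerivWithinAt c (dp t) (Icc t xmax) t)
    (havg : ∀ t ∈ Ioc 0 z, dp t < (w + c t) / t) : (w + c z) / z * y ≤ w + c y := by
  refine (le_div_iff₀ hy).1 (div_le_div_of_deriv_right_le_div (f := fun t => w + c t) hy hyz
    (continuousOn_const.add (hcont.mono (Icc_subset_Icc hy.le hzx))) (fun t ht => ?_)
    (fun t ht => (havg t ⟨hy.trans_le ht.1, ht.2.le⟩).le))
  have htx : t < xmax := ht.2.trans_le hzx
  exact ((hdp t (hy.trans_le ht.1) htx).mono_of_mem_nhdsWithin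
    (Icc_mem_nhdsGE htx)).const_add w

end Profit

theorem le_of_dual_le_of_profit_gain {ι : Type*} (s t : Finset ι) {F G : ℝ → ι → ℝ}
    (hF : ∀ i ∈ s, Monotone (F · i)) (hG : ∀ i ∈ t, Monotone (G · i)) {d z p K : ℝ} {j : ι}
    (hj : j ∈ t) (hdz : d < z) (hgain : (p - K) * z ≤ G p j - G K j)
    (hmax : K * d - ∑ i ∈ s, F K i - ∑ i ∈ t, G K i ≤ p * d - ∑ i ∈ s, F p i - ∑ i ∈ t, G p i) :
    p ≤ K := by
  by_contra! hKp
  have hFsum : ∑ i ∈ s, F K i ≤ ∑ i ∈ s, F p i := sum_le_sum fun i hi => hF i hi hKp.le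
  have hGsum : G p j - G K j ≤ ∑ i ∈ t, G p i - ∑ i ∈ t, G K i := by
    rw [← sum_sub_distrib]
    exact single_le_sum (fun i hi => sub_nonneg.2 (hG i hi hKp.le)) hj
  nlinarith [mul_pos (sub_pos.2 hKp) (sub_pos.2 hdz)]

theorem stmt_16_general (n : ℕ) (d : ℝ) (hd : 0 < d)
    (w xmax : Fin n → ℝ) (c : Fin n → ℝ → ℝ)
    (hw : ∀ i, 0 ≤ w i)
    (hcont : ∀ i, ContinuousOn (c i) (Set.Icc 0 (xmax i)))
    (hc0 : ∀ i, c i 0 = 0)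
    (dp : Fin n → ℝ → ℝ)
    (hdp : ∀ i, ∀ y, 0 < y → y < xmax i →
      HasDerivWithinAt (c i) (dp i y) (Set.Icc y (xmax i)) y)
    (Ihat : Finset (Fin n))
    (ε : Fin n → ℝ)
    (hεpos : ∀ i ∈ Ihat, 0 < ε i)
    (hεcap : ∀ i ∈ Ihat, d + ε i ≤ xmax i)
    (hεavg : ∀ i ∈ Ihat, ∀ y ∈ Set.Ioc (0 : ℝ) (d + ε i), dp i y < (w i + c i y) / y)
    (π πh : ℝ → Fin n → ℝ)
    (hπ : ∀ p i, IsGreatest ((fun ux => p * ux.2 - Cost (w i) (c i) ux) ''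
        Gen (xmax i)) (π p i))
    (hπh : ∀ p, ∀ i ∈ Ihat, IsGreatest ((fun ux => p * ux.2 - Cost (w i) (c i) ux) ''
        Ghat (xmax i) (xcmax n xmax d i) (ε i)) (πh p i)) :
    ∀ p ∈ {p : ℝ | ∀ q, q * d - ∑ i ∈ Ihatᶜ, π q i - ∑ i ∈ Ihat, πh q i
        ≤ p * d - ∑ i ∈ Ihatᶜ, π p i - ∑ i ∈ Ihat, πh p i},
      (∀ i ∈ Ihat, p ≤ (w i + c i (d + ε i)) / (d + ε i))
      ∧ ∀ i ∈ Ihat, πh p i = 0 := by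
  intro p hp
  have hxc : ∀ i ∈ Ihat, xcmax n xmax d i = d := fun i hi =>
    min_eq_left (by linarith [hεpos i hi, hεcap i hi])
  have hzero : ∀ i ∈ Ihat, ∀ q ≤ (w i + c i (d + ε i)) / (d + ε i), πh q i = 0 := by
    intro i hi q hq
    refine isGreatest_profit_Ghat_eq_zero (hw i) (hc0 i) (by linarith [hxc i hi, hεpos i hi])
      (fun x hx hxz => ?_) (hπh q i hi)
    rw [hxc i hi] at hxz
    exact (mul_le_mul_of_nonneg_right hq hx.le).trans
      (div_mul_le_of_deriv_right_lt hx hxz (hεcap i hi) (hcont i) (hdp i) (hεavg i hi))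
  have hbound : ∀ i ∈ Ihat, p ≤ (w i + c i (d + ε i)) / (d + ε i) := by
    intro i hi
    have hz : 0 < d + ε i := by linarith [hεpos i hi]
    have hmem : ((1 : ℝ), d + ε i) ∈ Ghat (xmax i) (xcmax n xmax d i) (ε i) :=
      ⟨⟨Or.inr rfl, hz.le, by simpa using hεcap i hi⟩, by rw [hxc i hi]⟩
    have hsupply := (hπh p i hi).2 ⟨_, hmem, rfl⟩
    refine le_of_dual_le_of_profit_gain Ihatᶜ Ihat
      (fun i _ => monotone_of_isGreatest_profit (fun _ h => Gen.snd_nonneg h) (hπ · i))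
      (fun i hi => monotone_of_isGreatest_profit
        (fun _ h => Gen.snd_nonneg (Ghat_subset_Gen _ _ _ h)) (hπh · i hi))
      hi (lt_add_of_pos_right d (hεpos i hi)) ?_ (hp _)
    rw [hzero i hi _ le_rfl, sub_mul, div_mul_cancel₀ _ hz.ne']
    simpa [Cost] using hsupply
  exact ⟨hbound, fun i hi => hzero i hi p (hbound i hi)⟩

/-- If `Î ≠ ∅` and each `ε_i > 0` (for `i ∈ Î`) satisfies `d + ε_i ≤ xmax i` and
`(w_i + c_i y)/y > ∂₊c_i(y)` on `(0, d + ε_i]`, then every `p ∈ P̄⁺(ε)` satisfies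
`p ≤ min_{i ∈ Î} (w_i + c_i(d+ε_i))/(d+ε_i)`, and consequently `π̂_i(p,ε_i) = 0` for all
`i ∈ Î`: no LNMGU has positive profit in the dual problem. -/
theorem stmt_16 (n : ℕ) (d : ℝ) (hd : 0 < d)
    (w xmax : Fin n → ℝ) (c : Fin n → ℝ → ℝ)
    (hxmax : ∀ i, 0 < xmax i) (hw : ∀ i, 0 ≤ w i)
    (hconv : ∀ i, ConvexOn ℝ (Set.Icc 0 (xmax i)) (c i))
    (hmono : ∀ i, MonotoneOn (c i) (Set.Icc 0 (xmax i)))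
    (hcont : ∀ i, ContinuousOn (c i) (Set.Icc 0 (xmax i)))
    (hc0 : ∀ i, c i 0 = 0)
    (hfeas : d ≤ ∑ i, xmax i)
    (dp : Fin n → ℝ → ℝ)
    (hdp : ∀ i, ∀ y, 0 < y → y < xmax i →
      HasDerivWithinAt (c i) (dp i y) (Set.Icc y (xmax i)) y)
    (Ihat : Finset (Fin n))
    (hIhat : ∀ i, i ∈ Ihat ↔
      (d < xmax i ∧ ∀ y ∈ Set.Ioc (0 : ℝ) d, dp i y < (w i + c i y) / y))
    (hne : Ihat.Nonempty)
    (ε : Fin n → ℝ)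
    (hεpos : ∀ i ∈ Ihat, 0 < ε i)
    (hεcap : ∀ i ∈ Ihat, d + ε i ≤ xmax i)
    (hεavg : ∀ i ∈ Ihat, ∀ y ∈ Set.Ioc (0 : ℝ) (d + ε i), dp i y < (w i + c i y) / y)
    (π πh : ℝ → Fin n → ℝ)
    (hπ : ∀ p i, IsGreatest ((fun ux => p * ux.2 - Cost (w i) (c i) ux) ''
        Gen (xmax i)) (π p i))
    (hπh : ∀ p, ∀ i ∈ Ihat, IsGreatest ((fun ux => p * ux.2 - Cost (w i) (c i) ux) ''
        Ghat (xmax i) (xcmax n xmax d i) (ε i)) (πh p i)) :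
    ∀ p ∈ {p : ℝ | ∀ q, q * d - ∑ i ∈ Ihatᶜ, π q i - ∑ i ∈ Ihat, πh q i
        ≤ p * d - ∑ i ∈ Ihatᶜ, π p i - ∑ i ∈ Ihat, πh p i},
      (∀ i ∈ Ihat, p ≤ (w i + c i (d + ε i)) / (d + ε i))
      ∧ ∀ i ∈ Ihat, πh p i = 0 :=
  stmt_16_general n d hd w xmax c hw hcont hc0 dp hdp Ihat ε hεpos hεcap hεavg π πh hπ hπh
end
end
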